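/- Suppose Δ is an unsatisfiable set of linear clauses such that unit propagation on Δ starting from the empty unit set cannot derive a contradiction. Then every Res(⊕) refutation of Δ, viewed in subspace form as a derivation starting from the linear negations of clauses of Δ and ending with the zero subspace using the addition rule, contains an addition step — deriving span(A, B, f+g+𝟏) from span(A, f) and span(B, g) — such that at least one of the decompositions (A, f) and (B, g) is asserting-like for Δ. -/

import Mathlib

namespace XorSAT

/-- An affine equation over `n` Boolean variables: the coefficients of the `n`
variables together with a right-hand side, i.e. a vector in `F₂^(n+1)`. -/
abbrev Eqn (n : ℕ) : Type := (Fin n → ZMod 2) × ZMod 2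

/-- The equation `𝟏`, i.e. `0 = 1`, satisfied by no assignment. -/
def oneEq (n : ℕ) : Eqn n := (0, 1)

/-- An assignment `x` satisfies the equation `(a, b)` iff `∑ aᵢ xᵢ = b`. -/
def Sats {n : ℕ} (x : Fin n → ZMod 2) (e : Eqn n) : Prop :=
  (∑ i, e.1 i * x i) = e.2

/-- A linear clause: a (finite) disjunction of affine equations. -/
abbrev Clause (n : ℕ) : Type := Finset (Eqn n)

/-- An assignment satisfies a linear clause iff it satisfies some equation in it. -/
def SatsClause {n : ℕ} (x : Fin n → ZMod 2) (C : Clause n) : Prop :=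
  ∃ e ∈ C, Sats x e

/-- A clause is non-tautological if some assignment falsifies every equation of it. -/
def NonTaut {n : ℕ} (C : Clause n) : Prop :=
  ∃ x : Fin n → ZMod 2, ∀ e ∈ C, ¬ Sats x e

/-- The linear negation `⟨C⟩` of a clause `C = f₁ ∨ … ∨ f_m`:
the `F₂`-span of `f₁ + 𝟏, …, f_m + 𝟏`. -/
def linneg {n : ℕ} (C : Clause n) : Submodule (ZMod 2) (Eqn n) :=
  Submodule.span (ZMod 2) ((fun e => e + oneEq n) '' (C : Set (Eqn n)))

/-- A set of equations is consistent if some assignment satisfies all of them. -/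
def Consistent {n : ℕ} (U : Set (Eqn n)) : Prop :=
  ∃ x : Fin n → ZMod 2, ∀ e ∈ U, Sats x e

/-- The `F₂`-linear span of a set of equations, as a submodule. -/
def spn {n : ℕ} (U : Set (Eqn n)) : Submodule (ZMod 2) (Eqn n) :=
  Submodule.span (ZMod 2) U


/-- Unit propagation on clause `C` from units `U` may deduce the equation `f`. -/
def CanDeduce {n : ℕ} (U : Set (Eqn n)) (C : Clause n) (f : Eqn n) : Prop :=
  ¬ linneg C ≤ spn U ∧ linneg C ≤ spn (insert (f + oneEq n) U) ∧
    f ∉ spn U ∧ f + oneEq n ∉ spn U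

/-- One step of unit propagation on the clause set `Δ`: a clause `C ∈ Δ` either
deduces the contradiction `𝟏` (if `⟨C⟩ ⊆ span U`) or deduces some equation `f`. -/
def UPStep {n : ℕ} (Δ : Set (Clause n)) (U U' : Set (Eqn n)) : Prop :=
  Consistent U ∧ ∃ C ∈ Δ,
    (linneg C ≤ spn U ∧ U' = insert (oneEq n) U) ∨
    (∃ f, CanDeduce U C f ∧ U' = insert f U)

/-- A (finite) run of unit propagation on the clause set `Δ`. -/
def UPRun {n : ℕ} (Δ : Set (Clause n)) : Set (Eqn n) → Set (Eqn n) → Prop :=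
  Relation.ReflTransGen (UPStep Δ)

/-- The units `V` are conflict-like w.r.t. `Δ`: some run of unit propagation
starting from `V` and using clauses of `Δ` deduces `𝟏`. -/
def ConflictLike {n : ℕ} (Δ : Set (Clause n)) (V : Set (Eqn n)) : Prop :=
  ∃ W, UPRun Δ V W ∧ oneEq n ∈ W

/-- The decomposition `(V', f)` is absorbed by `Δ`: unit propagation from units `V'`
with clauses `Δ` either derives `𝟏` or derives a unit set whose span contains `f + 𝟏`. -/
def Absorbed {n : ℕ} (Δ : Set (Clause n)) (V' : Set (Eqn n)) (f : Eqn n) : Prop :=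
  ∃ W, UPRun Δ V' W ∧ (oneEq n ∈ W ∨ f + oneEq n ∈ spn W)

/-- Unit propagation on the clause `C` from units `U` results in some
propagation (deducing `𝟏` or deducing some equation). -/
def CanPropagate {n : ℕ} (U : Set (Eqn n)) (C : Clause n) : Prop :=
  linneg C ≤ spn U ∨ ∃ f, CanDeduce U C f

/-- A decomposition `(V', f)` of a conflict-like subspace is asserting-like for `Δ`
if `span(V' ∪ {f})` is conflict-like w.r.t. `Δ` and `(V', f)` is not absorbed by `Δ`. -/
def AssertingLike {n : ℕ} (Δ : Set (Clause n)) (V' : Set (Eqn n)) (f : Eqn n) : Prop :=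
  ConflictLike Δ ((spn (insert f V') : Submodule (ZMod 2) (Eqn n)) : Set (Eqn n)) ∧
  ¬ Absorbed Δ V' f

/-- The data of one addition step in a subspace-form `Res(⊕)` proof: premiss
indices `i, j` and the decompositions `(A, f)` and `(B, g)` being used. -/
structure AddData (n : ℕ) where
  i : ℕ
  j : ℕ
  A : Set (Eqn n)
  f : Eqn n
  B : Set (Eqn n)
  g : Eqn n

/-- Validity of line `k` of a subspace-form `Res(⊕)` proof from `Δ`: an axiom line
is the linear negation of a clause of `Δ`; an addition line is derived from the
decompositions `L i = span(A, f)` and `L j = span(B, g)` as `span(A, B, f+g+𝟏)`. -/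
def SubStepOK {n : ℕ} (Δ : Set (Clause n)) (L : ℕ → Submodule (ZMod 2) (Eqn n))
    (k : ℕ) : Option (AddData n) → Prop
  | none => ∃ C ∈ Δ, L k = linneg C
  | some d => d.i < k ∧ d.j < k ∧
      L d.i = Submodule.span (ZMod 2) (insert d.f d.A) ∧
      L d.j = Submodule.span (ZMod 2) (insert d.g d.B) ∧
      L k = Submodule.span (ZMod 2) (d.A ∪ d.B ∪ {d.f + d.g + oneEq n})

/-! Unit propagation is monotone: whatever it derives from units `U` it also derives, up to
span, from any consistent `Z` with `span U ⊆ span Z`, unless it meets a conflict on the way.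
If no addition step of a refutation had an asserting-like decomposition, both premisses of
every step would be absorbed; propagating the two absorptions one after the other from the
conclusion `span(A, B, f + g + 𝟏)` yields `f + 𝟏`, `g + 𝟏` and `f + g + 𝟏`, which sum to `𝟏`.
By induction every line would then be conflict-like, including the final `{𝟎}`, whereas by
monotonicity `{𝟎}` is conflict-like only if `∅` is. -/

def evalAt {n : ℕ} (x : Fin n → ZMod 2) : Eqn n →ₗ[ZMod 2] ZMod 2 :=
  (Fintype.linearCombination (ZMod 2) x).coprod LinearMap.id

lemma sats_iff_evalAt_eq_zero {n : ℕ} (x : Fin n → ZMod 2) (e : Eqn n) :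
    Sats x e ↔ evalAt x e = 0 := by
  simp [Sats, evalAt, Fintype.linearCombination_apply, CharTwo.add_eq_zero]

lemma evalAt_oneEq {n : ℕ} (x : Fin n → ZMod 2) : evalAt x (oneEq n) = 1 := by
  simp [evalAt, oneEq]

lemma consistent_iff_oneEq_notMem_spn {n : ℕ} (U : Set (Eqn n)) :
    Consistent U ↔ oneEq n ∉ spn U := by
  constructor
  · rintro ⟨x, hx⟩ hone
    have hker : spn U ≤ LinearMap.ker (evalAt x) :=
      Submodule.span_le.mpr fun e he => (sats_iff_evalAt_eq_zero x e).mp (hx e he)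
    simpa [evalAt_oneEq] using hker hone
  · intro hone
    obtain ⟨φ, hφ, hmap⟩ := Submodule.exists_dual_map_eq_bot_of_notMem hone inferInstance
    have hker (v : Eqn n) (hv : v ∈ spn U) : φ v = 0 := by
      simpa [hmap] using Submodule.mem_map_of_mem (f := φ) hv
    -- a functional on `F₂^(n+1)` taking the value `1` at `𝟏` is evaluation at some point
    have hφ_one : φ (oneEq n) = 1 := by
      generalize φ (oneEq n) = a at hφ; revert a; decide
    have hφ_eq : φ = evalAt fun i => φ (Pi.single i 1, 0) := by
      ext i
      · simp [evalAt]
      · simpa [evalAt, oneEq] using hφ_one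
    refine ⟨fun i => φ (Pi.single i 1, 0), fun e he => ?_⟩
    rw [sats_iff_evalAt_eq_zero, ← hφ_eq]
    exact hker e (Submodule.subset_span he)

lemma spn_coe {n : ℕ} (V : Submodule (ZMod 2) (Eqn n)) : spn (V : Set (Eqn n)) = V :=
  Submodule.span_eq V

lemma consistent_coe_iff {n : ℕ} (V : Submodule (ZMod 2) (Eqn n)) :
    Consistent (V : Set (Eqn n)) ↔ oneEq n ∉ V := by
  rw [consistent_iff_oneEq_notMem_spn, spn_coe]

lemma Consistent.insert {n : ℕ} {Z : Set (Eqn n)} {f : Eqn n} (hZ : Consistent Z)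
    (hf : f + oneEq n ∉ spn Z) : Consistent (insert f Z) := by
  rw [consistent_iff_oneEq_notMem_spn] at hZ ⊢
  intro hone
  obtain ⟨a, ha⟩ := Submodule.mem_span_insert'.mp hone
  rcases (by decide : ∀ a : ZMod 2, a = 0 ∨ a = 1) a with rfl | rfl
  · exact hZ (by simpa [spn] using ha)
  · exact hf (by simpa [spn, add_comm] using ha)

lemma UPStep.subset {n : ℕ} {Δ : Set (Clause n)} {U U' : Set (Eqn n)}
    (h : UPStep Δ U U') : U ⊆ U' := by
  obtain ⟨-, C, -, ⟨-, rfl⟩ | ⟨f, -, rfl⟩⟩ := h <;> exact Set.subset_insert _ _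

lemma UPRun.subset {n : ℕ} {Δ : Set (Clause n)} {U W : Set (Eqn n)}
    (h : UPRun Δ U W) : U ⊆ W := by
  induction h with
  | refl => exact subset_rfl
  | tail _ hstep ih => exact ih.trans hstep.subset

lemma ConflictLike.of_upRun {n : ℕ} {Δ : Set (Clause n)} {Z Z' : Set (Eqn n)}
    (hrun : UPRun Δ Z Z') (h : ConflictLike Δ Z') : ConflictLike Δ Z :=
  let ⟨W, hW, hone⟩ := h
  ⟨W, hrun.trans hW, hone⟩

lemma conflictLike_of_linneg_le {n : ℕ} {Δ : Set (Clause n)} {Z : Set (Eqn n)} {C : Clause n}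
    (hC : C ∈ Δ) (hZ : Consistent Z) (hle : linneg C ≤ spn Z) : ConflictLike Δ Z :=
  ⟨insert (oneEq n) Z, .single ⟨hZ, C, hC, .inl ⟨hle, rfl⟩⟩, Set.mem_insert _ _⟩

lemma spn_insert_le {n : ℕ} {f : Eqn n} {U : Set (Eqn n)} {Z : Submodule (ZMod 2) (Eqn n)}
    (hf : f ∈ Z) (hU : spn U ≤ Z) : spn (insert f U) ≤ Z := by
  rw [spn, Submodule.span_insert]
  exact sup_le ((Submodule.span_singleton_le_iff_mem _ _).mpr hf) hU

lemma spn_insert_mono {n : ℕ} {f : Eqn n} {U Z : Set (Eqn n)} (hle : spn U ≤ spn Z) :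
    spn (insert f U) ≤ spn (insert f Z) := by
  simp only [spn, Submodule.span_insert]
  exact sup_le_sup_left hle _

lemma UPStep.simulate {n : ℕ} {Δ : Set (Clause n)} {U U' Z : Set (Eqn n)}
    (h : UPStep Δ U U') (hle : spn U ≤ spn Z) (hZ : Consistent Z) :
    ConflictLike Δ Z ∨ ∃ Z', UPRun Δ Z Z' ∧ Consistent Z' ∧ spn U' ≤ spn Z' := by
  obtain ⟨-, C, hC, ⟨hlin, -⟩ | ⟨f, ⟨-, hlin, -, -⟩, rfl⟩⟩ := h
  · exact .inl (conflictLike_of_linneg_le hC hZ (hlin.trans hle))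
  by_cases hfZ : f ∈ spn Z
  · exact .inr ⟨Z, .refl, hZ, spn_insert_le hfZ hle⟩
  by_cases hf1Z : f + oneEq n ∈ spn Z
  · exact .inl (conflictLike_of_linneg_le hC hZ (hlin.trans (spn_insert_le hf1Z hle)))
  by_cases hlinZ : linneg C ≤ spn Z
  · exact .inl (conflictLike_of_linneg_le hC hZ hlinZ)
  have hded : CanDeduce Z C f := ⟨hlinZ, hlin.trans (spn_insert_mono hle), hfZ, hf1Z⟩
  exact .inr ⟨insert f Z, .single ⟨hZ, C, hC, .inr ⟨f, hded, rfl⟩⟩, hZ.insert hf1Z,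
    spn_insert_mono hle⟩

lemma UPRun.simulate {n : ℕ} {Δ : Set (Clause n)} {U W Z : Set (Eqn n)}
    (h : UPRun Δ U W) (hle : spn U ≤ spn Z) (hZ : Consistent Z) :
    ConflictLike Δ Z ∨ ∃ Z', UPRun Δ Z Z' ∧ Consistent Z' ∧ spn W ≤ spn Z' := by
  induction h with
  | refl => exact .inr ⟨Z, .refl, hZ, hle⟩
  | tail _ hstep ih =>
    obtain hconf | ⟨Z₁, hrun₁, hZ₁, hle₁⟩ := ih
    · exact .inl hconf
    obtain hconf | ⟨Z₂, hrun₂, hZ₂, hle₂⟩ := hstep.simulate hle₁ hZ₁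
    · exact .inl (hconf.of_upRun hrun₁)
    · exact .inr ⟨Z₂, hrun₁.trans hrun₂, hZ₂, hle₂⟩

lemma ConflictLike.mono {n : ℕ} {Δ : Set (Clause n)} {U Z : Set (Eqn n)}
    (h : ConflictLike Δ U) (hle : spn U ≤ spn Z) (hZ : Consistent Z) : ConflictLike Δ Z := by
  obtain ⟨W, hrun, hone⟩ := h
  obtain hconf | ⟨Z', -, hZ', hle'⟩ := hrun.simulate hle hZ
  · exact hconf
  · exact absurd (hle' (Submodule.subset_span hone)) ((consistent_iff_oneEq_notMem_spn Z').mp hZ')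

lemma Absorbed.simulate {n : ℕ} {Δ : Set (Clause n)} {A Z : Set (Eqn n)} {f : Eqn n}
    (h : Absorbed Δ A f) (hle : spn A ≤ spn Z) (hZ : Consistent Z) :
    ConflictLike Δ Z ∨ ∃ Z', UPRun Δ Z Z' ∧ Consistent Z' ∧ f + oneEq n ∈ spn Z' := by
  obtain ⟨W, hrun, hW⟩ := h
  obtain hconf | ⟨Z', hrun', hZ', hle'⟩ := hrun.simulate hle hZ
  · exact .inl hconf
  refine .inr ⟨Z', hrun', hZ', ?_⟩
  rcases hW with hone | hf
  · exact absurd (hle' (Submodule.subset_span hone)) ((consistent_iff_oneEq_notMem_spn Z').mp hZ')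
  · exact hle' hf

lemma conflictLike_linneg {n : ℕ} {Δ : Set (Clause n)} {C : Clause n} (hC : C ∈ Δ) :
    ConflictLike Δ (linneg C : Set (Eqn n)) := by
  by_cases hone : oneEq n ∈ linneg C
  · exact ⟨_, .refl, hone⟩
  · exact conflictLike_of_linneg_le hC ((consistent_coe_iff _).mpr hone) (spn_coe _).ge

lemma conflictLike_span_of_absorbed {n : ℕ} {Δ : Set (Clause n)} {A B : Set (Eqn n)}
    {f g : Eqn n} (hA : Absorbed Δ A f) (hB : Absorbed Δ B g) :
    ConflictLike Δ (Submodule.span (ZMod 2) (A ∪ B ∪ {f + g + oneEq n}) : Set (Eqn n)) := by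
  set V := Submodule.span (ZMod 2) (A ∪ B ∪ {f + g + oneEq n})
  by_cases hone : oneEq n ∈ V
  · exact ⟨_, .refl, hone⟩
  have hAV : spn A ≤ spn (V : Set (Eqn n)) := by
    rw [spn_coe]; exact Submodule.span_mono (by tauto_set)
  obtain hconf | ⟨Z₁, hrun₁, hZ₁, hf⟩ := hA.simulate hAV ((consistent_coe_iff V).mpr hone)
  · exact hconf
  have hVZ₁ : (V : Set (Eqn n)) ⊆ spn Z₁ := hrun₁.subset.trans Submodule.subset_span
  have hBZ₁ : spn B ≤ spn Z₁ :=
    Submodule.span_le.mpr fun b hb => hVZ₁ (Submodule.subset_span (by simp [hb]))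
  obtain hconf | ⟨Z₂, hrun₂, hZ₂, hg⟩ := hB.simulate hBZ₁ hZ₁
  · exact hconf.of_upRun hrun₁
  have hZ₁₂ : spn Z₁ ≤ spn Z₂ := Submodule.span_mono hrun₂.subset
  have hfg : f + g + oneEq n ∈ spn Z₂ := hZ₁₂ (hVZ₁ (Submodule.subset_span (by simp)))
  have hsum : (f + oneEq n) + (g + oneEq n) + (f + g + oneEq n) = oneEq n := by
    have h2 (v : Eqn n) : v + v = 0 :=
      Prod.ext (funext fun _ => CharTwo.add_self_eq_zero _) (CharTwo.add_self_eq_zero _)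
    calc (f + oneEq n) + (g + oneEq n) + (f + g + oneEq n)
        = (f + f) + (g + g) + (oneEq n + oneEq n) + oneEq n := by abel
      _ = oneEq n := by simp [h2]
  refine absurd ?_ ((consistent_iff_oneEq_notMem_spn Z₂).mp hZ₂)
  rw [← hsum]
  exact add_mem (add_mem (hZ₁₂ hf) hg) hfg

lemma conflictLike_of_forall_not_assertingLike {n : ℕ} {Δ : Set (Clause n)} {N : ℕ}
    {L : ℕ → Submodule (ZMod 2) (Eqn n)} {J : ℕ → Option (AddData n)}
    (hvalid : ∀ k < N, SubStepOK Δ L k (J k))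
    (hnone : ∀ k < N, ∀ d : AddData n, J k = some d →
      ¬ AssertingLike Δ d.A d.f ∧ ¬ AssertingLike Δ d.B d.g) :
    ∀ k < N, ConflictLike Δ (L k : Set (Eqn n)) := by
  intro k
  induction k using Nat.strong_induction_on with
  | _ k ih =>
    intro hk
    have hok := hvalid k hk
    cases hJ : J k with
    | none =>
      rw [hJ] at hok
      obtain ⟨C, hC, hLk⟩ := hok
      exact hLk ▸ conflictLike_linneg hC
    | some d =>
      rw [hJ] at hok
      obtain ⟨hi, hj, hLi, hLj, hLk⟩ := hok
      obtain ⟨hnA, hnB⟩ := hnone k hk d hJ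
      have hA : Absorbed Δ d.A d.f :=
        not_and_not_right.mp hnA (by rw [spn, ← hLi]; exact ih _ hi (hi.trans hk))
      have hB : Absorbed Δ d.B d.g :=
        not_and_not_right.mp hnB (by rw [spn, ← hLj]; exact ih _ hj (hj.trans hk))
      exact hLk ▸ conflictLike_span_of_absorbed hA hB

theorem stmt14_general {n : ℕ} (Δ : Set (Clause n))
    (hnoUP : ¬ ConflictLike Δ (∅ : Set (Eqn n)))
    (N : ℕ) (L : ℕ → Submodule (ZMod 2) (Eqn n)) (J : ℕ → Option (AddData n))
    (hvalid : ∀ k < N, SubStepOK Δ L k (J k))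
    (href : ∃ k < N, L k = ⊥) :
    ∃ k < N, ∃ d : AddData n, J k = some d ∧
      (AssertingLike Δ d.A d.f ∨ AssertingLike Δ d.B d.g) := by
  by_contra hcon
  simp only [not_exists, not_and, not_or] at hcon
  obtain ⟨k, hk, hbot⟩ := href
  have hconf := conflictLike_of_forall_not_assertingLike hvalid hcon k hk
  rw [hbot] at hconf
  have hempty : Consistent (∅ : Set (Eqn n)) := ⟨0, by simp⟩
  exact hnoUP (hconf.mono (by rw [spn_coe]; exact bot_le) hempty)

/-- If `Δ` is unsatisfiable but unit propagation alone cannot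
derive a contradiction from `Δ`, then every subspace-form `Res(⊕)` refutation of
`Δ` (ending with the zero subspace) contains an addition step one of whose two
decompositions is asserting-like for `Δ`. -/
theorem stmt14 {n : ℕ} (Δ : Set (Clause n))
    (hunsat : ¬ ∃ x : Fin n → ZMod 2, ∀ C ∈ Δ, SatsClause x C)
    (hnoUP : ¬ ConflictLike Δ (∅ : Set (Eqn n)))
    (N : ℕ) (L : ℕ → Submodule (ZMod 2) (Eqn n)) (J : ℕ → Option (AddData n))
    (hvalid : ∀ k < N, SubStepOK Δ L k (J k))
    (href : ∃ k < N, L k = ⊥) :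
    ∃ k < N, ∃ d : AddData n, J k = some d ∧
      (AssertingLike Δ d.A d.f ∨ AssertingLike Δ d.B d.g) :=
  stmt14_general Δ hnoUP N L J hvalid href

end XorSAT
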